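/- Fix integers n, k with 0 < k < n, set r := n − k, assume r ∣ n, and set ℓ := r. Then there exists a finite field B and a B-linear subspace C of the space of maps Fin n → Fin ℓ → B such that: (i) the B-dimension of C equals k·ℓ; (ii) (MDS property) for every subset S of Fin n with |S| = k, any two elements c, c′ of C satisfying c j = c′ j for all j ∈ S are equal; and (iii) for every i ∈ Fin n there exists D : Fin n → Finset (Fin ℓ) with D i = ∅ and ∑_j |D j| ≤ 2·(n−1), such that any two elements c, c′ of C satisfying c j y = c′ j y for all j and all y ∈ D j also satisfy c i = c′ i. -/

import Mathlib

/-!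
The code is the kernel of the `r² × nr` parity-check matrix `P ⊗ 1 + ε H₁`, where `P` is the
`r × n` matrix of powers `λⱼ ^ s` of distinct points: for `ε = 0` it is `r` independent
Reed–Solomon layers, one per symbol index. The nodes are split into `n / r` groups of `r`, one
node of each group at each position `x`; the coupling `H₁` adds to layer `x` the symbols `y ≠ x`
of the node at position `x`, weighted by the point of its groupmate at position `y`.

MDS: for each set of `r` nodes the corresponding square minor of `P ⊗ 1 + X H₁` is a polynomial of
degree at most `r²` whose value at `0` is a power of a Vandermonde determinant, so over a large
prime field some `ε ≠ 0` is a root of none of them. The dimension then follows from rank–nullity.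

Repair of node `i` at position `x`: download the whole blocks of the other nodes at position `x`
and symbol `x` of all other nodes, `(n/r - 1) r + (n - n/r) ≤ 2 (n - 1)` symbols. Layer `x` then
reads `∑ y, w y * μ y ^ s = 0` for `s < r`, with `w x = c i x`, `w y = ε * c i y` otherwise, and
`μ y` the point of the groupmate of `i` at position `y`; Vandermonde gives `w = 0`.
-/

open Matrix Polynomial Finset
open Function (Injective)
open scoped Kronecker

theorem Polynomial.eval_det_X_smul_add {R ρ : Type*} [CommRing R] [Fintype ρ] [DecidableEq ρ]
    (A B : Matrix ρ ρ R) (ε : R) :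
    (det ((X : R[X]) • A.map C + B.map C)).eval ε = det (B + ε • A) := by
  rw [← coe_evalRingHom, RingHom.map_det]
  congr 1
  ext i j
  simp only [RingHom.mapMatrix_apply, map_apply, Matrix.add_apply, Matrix.smul_apply, smul_eq_mul,
    coe_evalRingHom, eval_add, eval_mul, eval_X, eval_C]
  ring

theorem Matrix.exists_ne_zero_forall_det_add_smul_ne_zero {K τ ρ : Type*} [CommRing K]
    [IsDomain K] [Fintype K] [Fintype τ] [Fintype ρ] [DecidableEq ρ] (A B : τ → Matrix ρ ρ K)
    (hB : ∀ t, det (B t) ≠ 0)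
    (hcard : 1 + Fintype.card τ * Fintype.card ρ < Fintype.card K) :
    ∃ ε : K, ε ≠ 0 ∧ ∀ t, det (B t + ε • A t) ≠ 0 := by
  -- the factor `X` keeps the chosen `ε` away from `0`
  set P : K[X] := X * ∏ t, det ((X : K[X]) • (A t).map C + (B t).map C)
  have hP : P ≠ 0 := by
    refine mul_ne_zero X_ne_zero (prod_ne_zero_iff.mpr fun t _ h => hB t ?_)
    simpa using (eval_det_X_smul_add (A t) (B t) 0).symm.trans (congr_arg (eval 0) h)
  have hdeg : P.natDegree < Fintype.card K := by
    calc P.natDegree ≤ 1 + ∑ t, (det ((X : K[X]) • (A t).map C + (B t).map C)).natDegree :=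
          natDegree_mul_le.trans (add_le_add natDegree_X_le (natDegree_prod_le _ _))
      _ ≤ 1 + ∑ _t : τ, Fintype.card ρ := by
          gcongr with t; exact natDegree_det_X_add_C_le _ _
      _ < Fintype.card K := by simpa using hcard
  obtain ⟨ε, hε⟩ := P.exists_eval_ne_zero_of_natDegree_lt_card hP (by simpa using hdeg)
  simp only [P, eval_mul, eval_X, eval_prod, eval_det_X_smul_add, mul_ne_zero_iff,
    prod_ne_zero_iff] at hε
  exact ⟨ε, hε.1, fun t => hε.2 t (mem_univ t)⟩

theorem Matrix.eq_zero_of_mulVec_eq_zero_of_det_submatrix_ne_zero {K σ ι κ : Type*}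
    [CommRing K] [IsDomain K] [Fintype σ] [DecidableEq σ] [Fintype ι] [Fintype κ] [DecidableEq κ]
    {H : Matrix (σ × κ) (ι × κ) K} {t : σ ↪ ι}
    (hdet : det (H.submatrix id (Prod.map t id)) ≠ 0) {c : ι × κ → K} (hc : H *ᵥ c = 0)
    (hsupp : ∀ u : ι × κ, u.1 ∉ Set.range t → c u = 0) : c = 0 := by
  have hsub : H.submatrix id (Prod.map t id) *ᵥ (c ∘ Prod.map t id) = 0 := by
    rw [← hc]
    ext q
    refine Fintype.sum_of_injective _ (t.injective.prodMap Function.injective_id) _ _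
      (fun u hu => ?_) fun _ => rfl
    rw [hsupp u fun ⟨a, ha⟩ => hu ⟨(a, u.2), Prod.ext ha rfl⟩, mul_zero]
  have hzero := eq_zero_of_mulVec_eq_zero hdet hsub
  ext ⟨j, y⟩
  by_cases hj : j ∈ Set.range t
  · obtain ⟨a, rfl⟩ := hj
    exact congr_fun hzero (a, y)
  · exact hsupp (j, y) hj

theorem Submodule.finrank_le_card_mul_finrank {K ι M : Type*} [Field K] [Fintype ι]
    [AddCommGroup M] [Module K M] [FiniteDimensional K M] (C : Submodule K (ι → M)) (S : Finset ι)
    (hS : ∀ c ∈ C, (∀ j ∈ S, c j = 0) → c = 0) :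
    Module.finrank K C ≤ #S * Module.finrank K M := by
  let restrict : C →ₗ[K] (S → M) := LinearMap.funLeft K M Subtype.val ∘ₗ C.subtype
  have hinj : Injective restrict := by
    refine (injective_iff_map_eq_zero restrict).mpr fun c hc => Subtype.ext ?_
    exact hS c c.2 fun j hj => congr_fun hc ⟨j, hj⟩
  simpa [Module.finrank_pi_fintype] using LinearMap.finrank_le_finrank_of_injective hinj

namespace CoupledCode

def download {m r : ℕ} (p₀ p : Fin m × Fin r) : Finset (Fin r) :=
  if p = p₀ then ∅ else if p.2 = p₀.2 then univ else {p₀.2}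

theorem mem_download {m r : ℕ} {p₀ p : Fin m × Fin r} {y : Fin r} :
    y ∈ download p₀ p ↔ p ≠ p₀ ∧ (p.2 = p₀.2 ∨ y = p₀.2) := by
  unfold download
  split_ifs <;> simp_all

theorem sum_card_download {m r : ℕ} (p₀ : Fin m × Fin r) :
    ∑ p, #(download p₀ p) + m + r = 2 * (m * r) := by
  have h : ∀ p, #(download p₀ p) + (if p = p₀ then r else 0) = if p.2 = p₀.2 then r else 1 := by
    intro p
    unfold download
    split_ifs <;> simp_all
  have hsum := Fintype.sum_congr _ _ h
  have hcount : #{p : Fin m × Fin r | p.2 = p₀.2} = m := by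
    simp only [card_filter, Fintype.sum_prod_type, sum_ite_eq', mem_univ, if_true, sum_const,
      card_univ, Fintype.card_fin, smul_eq_mul, mul_one]
  have hsplit := card_filter_add_card_filter_not (s := univ) fun p : Fin m × Fin r => p.2 = p₀.2
  simp only [sum_add_distrib, sum_ite_eq', mem_univ, if_true, sum_ite, sum_const, smul_eq_mul,
    mul_one, hcount, card_univ, Fintype.card_prod, Fintype.card_fin] at hsum hsplit
  linarith

theorem sum_card_download_le {ι : Type*} [Fintype ι] {m r : ℕ} (e : ι ≃ Fin m × Fin r) (i : ι) :
    ∑ j, #(download (e i) (e j)) ≤ 2 * (Fintype.card ι - 1) := by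
  have hsum := sum_card_download (e i)
  rw [← e.sum_comp] at hsum
  have hm := (e i).1.pos
  have hr := (e i).2.pos
  have hmr := Nat.mul_pos hm hr
  rw [Fintype.card_congr e, Fintype.card_prod, Fintype.card_fin, Fintype.card_fin]
  omega

section Matrices

variable {K : Type*} [Field K] {ι : Type*} {m r : ℕ} (e : ι ≃ Fin m × Fin r) (lam : ι → K)

/-- With `e j = (g, x)` read as "node `j` is the member of group `g` at position `x`", this is the
member of `j`'s group at position `y`. -/
def mate (j : ι) (y : Fin r) : ι := e.symm ((e j).1, y)

def powerMatrix : Matrix (Fin r) ι K := of fun s j => lam j ^ (s : ℕ)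

def couplingMatrix : Matrix (Fin r × Fin r) (ι × Fin r) K :=
  of fun q u => if (e u.1).2 = q.2 ∧ u.2 ≠ q.2 then lam (mate e u.1 u.2) ^ (q.1 : ℕ) else 0

def parityCheck (ε : K) : Matrix (Fin r × Fin r) (ι × Fin r) K :=
  powerMatrix lam ⊗ₖ 1 + ε • couplingMatrix e lam

variable {e lam}

theorem mate_self (j : ι) : mate e j (e j).2 = j := by simp [mate]

theorem mate_injective (j : ι) : Injective (mate e j) := fun y y' h => by
  simpa [mate] using h

theorem parityCheck_apply (ε : K) (s x : Fin r) (j : ι) (y : Fin r) :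
    parityCheck e lam ε (s, x) (j, y) =
      (if x = y then lam j ^ (s : ℕ) else 0) +
        ε * if (e j).2 = x ∧ y ≠ x then lam (mate e j y) ^ (s : ℕ) else 0 := by
  simp [parityCheck, powerMatrix, couplingMatrix, one_apply]

theorem det_submatrix_powerMatrix_kronecker_one_ne_zero (hlam : Injective lam) (t : Fin r ↪ ι) :
    det ((powerMatrix lam ⊗ₖ (1 : Matrix (Fin r) (Fin r) K)).submatrix id (Prod.map t id)) ≠ 0 := by
  have hV : (powerMatrix lam).submatrix id t = (vandermonde (lam ∘ t))ᵀ := rfl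
  change det ((powerMatrix lam).submatrix id t ⊗ₖ (1 : Matrix (Fin r) (Fin r) K)) ≠ 0
  rw [hV, det_kronecker, det_transpose, det_one, one_pow, mul_one]
  exact pow_ne_zero _ (det_vandermonde_ne_zero_iff.mpr (hlam.comp t.injective))

theorem exists_ne_zero_forall_det_submatrix_parityCheck_ne_zero [Fintype ι] [Fintype K]
    (hlam : Injective lam) (hcard : 1 + Fintype.card (Fin r ↪ ι) * (r * r) < Fintype.card K) :
    ∃ ε : K, ε ≠ 0 ∧
      ∀ t : Fin r ↪ ι, det ((parityCheck e lam ε).submatrix id (Prod.map t id)) ≠ 0 := by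
  simpa [parityCheck, submatrix_add, submatrix_smul] using
    exists_ne_zero_forall_det_add_smul_ne_zero
      (fun t : Fin r ↪ ι => (couplingMatrix e lam).submatrix id (Prod.map t id))
      (fun t : Fin r ↪ ι => (powerMatrix lam ⊗ₖ 1).submatrix id (Prod.map t id))
      (det_submatrix_powerMatrix_kronecker_one_ne_zero hlam)
      (by rwa [Fintype.card_prod, Fintype.card_fin])

end Matrices

section Code

variable {K : Type*} [Field K] {ι : Type*} [Fintype ι] {m r : ℕ}

def code (e : ι ≃ Fin m × Fin r) (lam : ι → K) (ε : K) : Submodule K (ι → Fin r → K) :=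
  LinearMap.ker
    ((parityCheck e lam ε).mulVecLin ∘ₗ (LinearEquiv.curry K K ι (Fin r)).symm.toLinearMap)

variable {e : ι ≃ Fin m × Fin r} {lam : ι → K} {ε : K}

theorem mem_code {c : ι → Fin r → K} :
    c ∈ code e lam ε ↔ parityCheck e lam ε *ᵥ Function.uncurry c = 0 :=
  Iff.rfl

theorem eq_zero_of_mem_code_of_forall_mem_eq_zero
    (hdet : ∀ t : Fin r ↪ ι, det ((parityCheck e lam ε).submatrix id (Prod.map t id)) ≠ 0)
    {S : Finset ι} (hS : #S + r = Fintype.card ι) {c : ι → Fin r → K} (hc : c ∈ code e lam ε)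
    (hcS : ∀ j ∈ S, c j = 0) : c = 0 := by
  classical
  have hSc : #Sᶜ = r := by rw [card_compl]; omega
  let t : Fin r ↪ ι :=
    (Sᶜ.equivFinOfCardEq hSc).symm.toEmbedding.trans (Function.Embedding.subtype _)
  have hrange : ∀ j, j ∉ Set.range t → j ∈ S := fun j hj => by
    by_contra hjS
    refine hj ⟨Sᶜ.equivFinOfCardEq hSc ⟨j, mem_compl.mpr hjS⟩, ?_⟩
    simp only [t, Function.Embedding.trans_apply, Equiv.coe_toEmbedding, Equiv.symm_apply_apply,
      Function.Embedding.subtype_apply]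
  have huncurry := eq_zero_of_mulVec_eq_zero_of_det_submatrix_ne_zero (hdet t) (mem_code.mp hc)
    fun u hu => congr_fun (hcS u.1 (hrange u.1 hu)) u.2
  funext j y
  exact congr_fun huncurry (j, y)

theorem finrank_code
    (hdet : ∀ t : Fin r ↪ ι, det ((parityCheck e lam ε).submatrix id (Prod.map t id)) ≠ 0)
    {k : ℕ} (hk : k + r = Fintype.card ι) : Module.finrank K (code e lam ε) = k * r := by
  classical
  obtain ⟨S, -, hS⟩ := exists_subset_card_eq (s := (univ : Finset ι)) (n := k) (by simp; omega)
  have hle : Module.finrank K (code e lam ε) ≤ k * r := by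
    simpa [hS] using (code e lam ε).finrank_le_card_mul_finrank S
      fun c hc => eq_zero_of_mem_code_of_forall_mem_eq_zero hdet (by omega) hc
  let f := (parityCheck e lam ε).mulVecLin ∘ₗ (LinearEquiv.curry K K ι (Fin r)).symm.toLinearMap
  have hrank := LinearMap.finrank_range_add_finrank_ker f
  have hrange := Submodule.finrank_le (LinearMap.range f)
  simp only [Module.finrank_pi_fintype, Module.finrank_self, Fintype.card_prod, Fintype.card_fin,
    sum_const, card_univ, smul_eq_mul, ← hk] at hrank hrange
  change _ + Module.finrank K (code e lam ε) = _ at hrank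
  nlinarith

theorem parityCheck_mulVec_apply_of_forall_mem_download_eq_zero {c : ι → Fin r → K} {i : ι}
    (hD : ∀ j, ∀ y ∈ download (e i) (e j), c j y = 0) (s : Fin r) :
    (parityCheck e lam ε *ᵥ Function.uncurry c) (s, (e i).2) =
      ∑ y, c i y * (if y = (e i).2 then 1 else ε) * lam (mate e i y) ^ (s : ℕ) := by
  rw [mulVec, dotProduct, Fintype.sum_prod_type, sum_eq_single i]
  · refine sum_congr rfl fun y _ => ?_
    rw [parityCheck_apply]
    by_cases hy : y = (e i).2
    · subst hy
      simp [mate_self, mul_comm]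
    · simp only [hy, Ne.symm hy, ↓reduceIte, ne_eq, not_false_eq_true, and_self, zero_add,
        Function.uncurry_apply_pair]
      ring
  · intro j _ hji
    have hne : e j ≠ e i := e.injective.ne hji
    refine sum_eq_zero fun y _ => ?_
    by_cases hj : (e j).2 = (e i).2
    · simp [hD j y (mem_download.mpr ⟨hne, Or.inl hj⟩)]
    by_cases hy : y = (e i).2
    · subst hy
      simp [hD j _ (mem_download.mpr ⟨hne, Or.inr rfl⟩)]
    · simp [parityCheck_apply, hj, Ne.symm hy]
  · simp

theorem eq_zero_of_mem_code_of_forall_mem_download_eq_zero (hlam : Injective lam) (hε : ε ≠ 0)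
    {c : ι → Fin r → K} (hc : c ∈ code e lam ε) {i : ι}
    (hD : ∀ j, ∀ y ∈ download (e i) (e j), c j y = 0) : c i = 0 := by
  have hv := eq_zero_of_forall_pow_sum_mul_pow_eq_zero (hlam.comp (mate_injective i)) fun s =>
    (parityCheck_mulVec_apply_of_forall_mem_download_eq_zero hD s).symm.trans
      (congr_fun (mem_code.mp hc) _)
  funext y
  have hy := congr_fun hv y
  by_cases hyi : y = (e i).2 <;> simp_all

end Code

end CoupledCode

open CoupledCode in
theorem exists_mds_code_twice_cut_set_general
    (n k : ℕ) (hkn : k < n)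
    (r ℓ : ℕ) (hr : r = n - k) (hdvd : r ∣ n) (hℓ : ℓ = r) :
    ∃ (B : Type) (_ : Field B) (_ : Fintype B)
      (C : Submodule B (Fin n → Fin ℓ → B)),
      Module.finrank B C = k * ℓ ∧
      (∀ S : Finset (Fin n), S.card = k →
        ∀ c ∈ C, ∀ c' ∈ C, (∀ j ∈ S, c j = c' j) → c = c') ∧
      (∀ i : Fin n, ∃ D : Fin n → Finset (Fin ℓ),
        D i = ∅ ∧
        (∑ j, (D j).card) ≤ 2 * (n - 1) ∧
        ∀ c ∈ C, ∀ c' ∈ C,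
          (∀ j : Fin n, ∀ y ∈ D j, c j y = c' j y) → c i = c' i) := by
  subst ℓ
  let e : Fin n ≃ Fin (n / r) × Fin r :=
    (finCongr (Nat.div_mul_cancel hdvd).symm).trans finProdFinEquiv.symm
  obtain ⟨p, hp_le, hp⟩ :=
    Nat.exists_infinite_primes (n + 1 + Fintype.card (Fin r ↪ Fin n) * (r * r))
  have : Fact p.Prime := ⟨hp⟩
  obtain ⟨lam⟩ : Nonempty (Fin n ↪ ZMod p) :=
    Function.Embedding.nonempty_of_card_le (by rw [Fintype.card_fin, ZMod.card]; omega)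
  obtain ⟨ε, hε, hdet⟩ :=
    exists_ne_zero_forall_det_submatrix_parityCheck_ne_zero (e := e) lam.injective
      (by rw [ZMod.card]; omega)
  refine ⟨ZMod p, inferInstance, inferInstance, code e lam ε, finrank_code hdet (by simp; omega),
    fun S hS c hc c' hc' h => ?_,
    fun i => ⟨fun j => download (e i) (e j), by simp [download], ?_, fun c hc c' hc' h => ?_⟩⟩
  · exact sub_eq_zero.mp (eq_zero_of_mem_code_of_forall_mem_eq_zero hdet (by simp; omega)
      (sub_mem hc hc') fun j hj => sub_eq_zero.mpr (h j hj))
  · simpa using sum_card_download_le e i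
  · exact sub_eq_zero.mp (eq_zero_of_mem_code_of_forall_mem_download_eq_zero lam.injective hε
      (sub_mem hc hc') fun j y hy => sub_eq_zero.mpr (h j y hy))

/-- Existence of MDS vector codes with sub-packetization level
`ℓ = n - k` whose every block admits repair-by-transfer with bandwidth at most
`2(n-1)`, i.e. twice the cut-set bound. -/
theorem exists_mds_code_twice_cut_set
    (n k : ℕ) (hk : 0 < k) (hkn : k < n)
    (r ℓ : ℕ) (hr : r = n - k) (hdvd : r ∣ n) (hℓ : ℓ = r) :
    ∃ (B : Type) (_ : Field B) (_ : Fintype B)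
      (C : Submodule B (Fin n → Fin ℓ → B)),
      Module.finrank B C = k * ℓ ∧
      (∀ S : Finset (Fin n), S.card = k →
        ∀ c ∈ C, ∀ c' ∈ C, (∀ j ∈ S, c j = c' j) → c = c') ∧
      (∀ i : Fin n, ∃ D : Fin n → Finset (Fin ℓ),
        D i = ∅ ∧
        (∑ j, (D j).card) ≤ 2 * (n - 1) ∧
        ∀ c ∈ C, ∀ c' ∈ C,
          (∀ j : Fin n, ∀ y ∈ D j, c j y = c' j y) → c i = c' i) :=
  exists_mds_code_twice_cut_set_general n k hkn r ℓ hr hdvd hℓ
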